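/- Hölder bound for the twisted first-order operator: let γ ∈ (0,1), T > 0, and let x : [0,T] → ℝ have finite Hölder seminorm ‖x‖_γ = sup_{0≤s<t≤T} |x_t − x_s|/(t−s)^γ. For 0 ≤ s ≤ t ≤ T and φ ∈ L^p(ℝ^n), the Bochner integral in the definition X^x_{ts} φ = (x_t − x_s) S_{t−s}φ − ∫_s^t (x_t − x_u) (∂g_{t−u} * φ) du converges absolutely in L^p(ℝ^n), and there is a constant C depending only on n and γ such that ‖X^x_{ts} φ‖_{L^p(ℝ^n)} ≤ C ‖x‖_γ (t−s)^γ ‖φ‖_{L^p(ℝ^n)} for all 0 ≤ s ≤ t ≤ T. -/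

import Mathlib

open MeasureTheory Real
open scoped ENNReal

/-- The heat kernel on ℝ^n: `g_t(ξ) = (2πt)^(-n/2) exp(-|ξ|²/(2t))`. -/
noncomputable def heatKernel (n : ℕ) (t : ℝ) : EuclideanSpace ℝ (Fin n) → ℝ :=
  fun ξ => (2 * π * t) ^ (-(n : ℝ) / 2) * Real.exp (-‖ξ‖ ^ 2 / (2 * t))

/-- Time derivative of the heat kernel:
`∂g_t(ξ) = (2πt)^(-n/2) e^{-|ξ|²/(2t)} (|ξ|²/(2t²) - n/(2t))`. -/
noncomputable def heatKernelDt (n : ℕ) (t : ℝ) : EuclideanSpace ℝ (Fin n) → ℝ :=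
  fun ξ => (2 * π * t) ^ (-(n : ℝ) / 2) * Real.exp (-‖ξ‖ ^ 2 / (2 * t)) *
    (‖ξ‖ ^ 2 / (2 * t ^ 2) - (n : ℝ) / (2 * t))

/-- Convolution of two real functions on ℝ^n. -/
noncomputable def convol {n : ℕ} (f g : EuclideanSpace ℝ (Fin n) → ℝ) :
    EuclideanSpace ℝ (Fin n) → ℝ :=
  fun ξ => ∫ η, f η * g (ξ - η)

/-- Heat semigroup at the level of functions: `S_t φ = g_t * φ` for `t > 0`,
`S_0 = Id` (also for `t ≤ 0`). -/
noncomputable def heatS (n : ℕ) (t : ℝ) (φ : EuclideanSpace ℝ (Fin n) → ℝ) :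
    EuclideanSpace ℝ (Fin n) → ℝ :=
  if 0 < t then convol (heatKernel n t) φ else φ

/-! The twisted integral is a superposition of convolutions with the kernels
`(x_t - x_u) ∂g_{t-u}`. Tonelli and Young's inequality, applied to the absolute values, show that
for almost every `ξ` the double integral converges absolutely, so by Fubini the twisted integral
is the convolution of `φ` with the single kernel `k = ∫_s^t (x_t - x_u) ∂g_{t-u} du`.
The pointwise bound `|∂g_r| ≤ (B / r) g_{2r}`, with `B = (n + 4) / 2 · 2^(n/2)`, gives
`‖∂g_r‖₁ ≤ B / r`, hence `‖k‖₁ ≤ ‖x‖_γ B ∫_s^t (t - u)^(γ-1) du = ‖x‖_γ B (t - s)^γ / γ`,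
and Young's inequality `‖k * φ‖_p ≤ ‖k‖₁ ‖φ‖_p` bounds the twisted term. The first term is
bounded because the heat semigroup is a contraction of `L^p`. -/

section Young

/-- Jensen's inequality for the measure `K ν`, obtained from Hölder's inequality with
exponents `1 / p` and `1 - 1 / p`. -/
theorem rpow_lintegral_mul_le {α : Type*} [MeasurableSpace α] {ν : Measure α}
    {K f : α → ℝ≥0∞} (hK : AEMeasurable K ν) (hf : AEMeasurable f ν) {p : ℝ} (hp : 1 ≤ p) :
    (∫⁻ a, K a * f a ∂ν) ^ p ≤ (∫⁻ a, K a ∂ν) ^ (p - 1) * ∫⁻ a, K a * f a ^ p ∂ν := by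
  have hp0 : 0 < p := zero_lt_one.trans_le hp
  have hq : 0 ≤ 1 - 1 / p := sub_nonneg.2 (div_le_one_of_le₀ hp hp0.le)
  have holder := ENNReal.lintegral_mul_norm_pow_le (f := fun a => K a * f a ^ p) (g := K)
    (hK.mul (hf.pow_const p)) hK (one_div_nonneg.2 hp0.le) hq (add_sub_cancel _ _)
  have hpt : ∀ a, (K a * f a ^ p) ^ (1 / p) * K a ^ (1 - 1 / p) = K a * f a := by
    intro a
    rw [ENNReal.mul_rpow_of_nonneg _ _ (by positivity), ← ENNReal.rpow_mul,
      mul_one_div_cancel hp0.ne', ENNReal.rpow_one, mul_right_comm,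
      ← ENNReal.rpow_add_of_nonneg _ _ (by positivity) hq, add_sub_cancel, ENNReal.rpow_one]
  simp_rw [hpt] at holder
  calc (∫⁻ a, K a * f a ∂ν) ^ p
      ≤ ((∫⁻ a, K a * f a ^ p ∂ν) ^ (1 / p) * (∫⁻ a, K a ∂ν) ^ (1 - 1 / p)) ^ p := by gcongr
    _ = (∫⁻ a, K a ∂ν) ^ (p - 1) * ∫⁻ a, K a * f a ^ p ∂ν := by
        rw [ENNReal.mul_rpow_of_nonneg _ _ hp0.le, ← ENNReal.rpow_mul, ← ENNReal.rpow_mul,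
          one_div_mul_cancel hp0.ne', ENNReal.rpow_one, mul_comm, sub_mul, one_mul,
          one_div_mul_cancel hp0.ne']

variable {G : Type*} [MeasurableSpace G] [AddGroup G] [MeasurableAdd₂ G] [MeasurableNeg G]
  {μ : Measure G} [SFinite μ] [μ.IsAddRightInvariant]

theorem lintegral_convolution_rpow_le {K Φ : G → ℝ≥0∞} (hK : Measurable K) (hΦ : Measurable Φ)
    {p : ℝ} (hp : 1 ≤ p) :
    ∫⁻ ξ, (∫⁻ η, K η * Φ (ξ - η) ∂μ) ^ p ∂μ ≤ (∫⁻ η, K η ∂μ) ^ p * ∫⁻ ξ, Φ ξ ^ p ∂μ := by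
  have htonelli : ∫⁻ ξ, ∫⁻ η, K η * Φ (ξ - η) ^ p ∂μ ∂μ =
      (∫⁻ η, K η ∂μ) * ∫⁻ ξ, Φ ξ ^ p ∂μ := by
    rw [lintegral_lintegral_swap (by fun_prop), ← lintegral_mul_const _ hK]
    refine lintegral_congr fun η => ?_
    rw [lintegral_const_mul _ (by fun_prop), lintegral_sub_right_eq_self (fun ξ => Φ ξ ^ p) η]
  calc ∫⁻ ξ, (∫⁻ η, K η * Φ (ξ - η) ∂μ) ^ p ∂μ
      ≤ ∫⁻ ξ, (∫⁻ η, K η ∂μ) ^ (p - 1) * ∫⁻ η, K η * Φ (ξ - η) ^ p ∂μ ∂μ :=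
        lintegral_mono fun ξ => rpow_lintegral_mul_le hK.aemeasurable (by fun_prop) hp
    _ = (∫⁻ η, K η ∂μ) ^ p * ∫⁻ ξ, Φ ξ ^ p ∂μ := by
        rw [lintegral_const_mul _ (by fun_prop), htonelli, ← mul_assoc]
        congr 1
        conv_rhs => rw [← sub_add_cancel p 1,
          ENNReal.rpow_add_of_nonneg _ _ (sub_nonneg.2 hp) zero_le_one, ENNReal.rpow_one]

theorem ae_lintegral_convolution_lt_top {K Φ : G → ℝ≥0∞} (hK : Measurable K)
    (hΦ : Measurable Φ) {p : ℝ} (hp : 1 ≤ p) (hKfin : ∫⁻ η, K η ∂μ ≠ ∞)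
    (hΦfin : ∫⁻ ξ, Φ ξ ^ p ∂μ ≠ ∞) :
    ∀ᵐ ξ ∂μ, ∫⁻ η, K η * Φ (ξ - η) ∂μ < ∞ := by
  have hp0 : 0 < p := zero_lt_one.trans_le hp
  have hfin : ∫⁻ ξ, (∫⁻ η, K η * Φ (ξ - η) ∂μ) ^ p ∂μ ≠ ∞ :=
    ((lintegral_convolution_rpow_le hK hΦ hp).trans_lt (ENNReal.mul_lt_top
      (ENNReal.rpow_lt_top_of_nonneg hp0.le hKfin) hΦfin.lt_top)).ne
  filter_upwards [ae_lt_top (by fun_prop) hfin] with ξ hξ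
  exact (ENNReal.rpow_lt_top_iff_of_pos hp0).1 hξ

end Young

section RealLine

open Set

theorem ContinuousOn.exists_continuous_eqOn_Icc {α β : Type*} [LinearOrder α]
    [TopologicalSpace α] [OrderTopology α] [TopologicalSpace β] {f : α → β} {a b : α}
    (hab : a ≤ b) (hf : ContinuousOn f (Icc a b)) :
    ∃ g : α → β, Continuous g ∧ EqOn g f (Icc a b) :=
  ⟨IccExtend hab ((Icc a b).domRestrict f),
    (continuousOn_iff_continuous_domRestrict.1 hf).Icc_extend',
    fun _ hu => IccExtend_of_mem hab _ hu⟩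

theorem continuousOn_Icc_of_abs_sub_le_rpow {x : ℝ → ℝ} {a b C γ : ℝ} (hγ : 0 < γ)
    (hx : ∀ u v, a ≤ u → u ≤ v → v ≤ b → |x v - x u| ≤ C * (v - u) ^ γ) :
    ContinuousOn x (Icc a b) := by
  intro u hu
  have hbound : ∀ v ∈ Icc a b, dist (x v) (x u) ≤ C * |v - u| ^ γ := by
    intro v hv
    rcases le_total u v with huv | hvu
    · simpa [Real.dist_eq, abs_of_nonneg (sub_nonneg.2 huv)] using hx u v hu.1 huv hv.2
    · simpa [Real.dist_eq, abs_sub_comm, abs_of_nonneg (sub_nonneg.2 hvu)]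
        using hx v u hv.1 hvu hu.2
  have hlim : Filter.Tendsto (fun v => C * |v - u| ^ γ) (nhdsWithin u (Icc a b)) (nhds 0) := by
    have hcont : Continuous fun v => C * |v - u| ^ γ :=
      continuous_const.mul ((by fun_prop : Continuous fun v => |v - u|).rpow_const
        fun _ => Or.inr hγ.le)
    simpa [hγ.ne'] using (hcont.tendsto u).mono_left nhdsWithin_le_nhds
  exact tendsto_iff_dist_tendsto_zero.2 <| squeeze_zero'
    (Filter.Eventually.of_forall fun _ => dist_nonneg) (eventually_nhdsWithin_of_forall hbound) hlim

theorem lintegral_Ioc_ofReal_sub_rpow {s t γ : ℝ} (hγ : 0 < γ) (hst : s ≤ t) :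
    ∫⁻ u in Ioc s t, ENNReal.ofReal ((t - u) ^ (γ - 1)) = ENNReal.ofReal ((t - s) ^ γ / γ) := by
  have hint : IntegrableOn (fun u => (t - u) ^ (γ - 1)) (Ioc s t) := by
    have := (intervalIntegral.intervalIntegrable_rpow' (a := 0) (b := t - s)
      (by linarith : -1 < γ - 1)).comp_sub_left t
    exact (intervalIntegrable_iff_integrableOn_Ioc_of_le hst).1 (by simpa using this.symm)
  have hnn : 0 ≤ᵐ[volume.restrict (Ioc s t)] fun u => (t - u) ^ (γ - 1) :=
    (ae_restrict_iff' measurableSet_Ioc).2 (Filter.Eventually.of_forall fun u hu =>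
      Real.rpow_nonneg (sub_nonneg.2 hu.2) _)
  rw [← ofReal_integral_eq_lintegral_ofReal hint hnn, ← intervalIntegral.integral_of_le hst,
    intervalIntegral.integral_comp_sub_left (fun u => u ^ (γ - 1)) t, sub_self,
    integral_rpow (Or.inl (by linarith)), sub_add_cancel, Real.zero_rpow hγ.ne', sub_zero]

end RealLine

section HeatKernel

variable {n : ℕ}

local notation "E" => EuclideanSpace ℝ (Fin n)

@[fun_prop]
theorem Measurable.heatKernelDt {α : Type*} [MeasurableSpace α] {f : α → ℝ} {g : α → E}
    (hf : Measurable f) (hg : Measurable g) : Measurable fun a => heatKernelDt n (f a) (g a) := by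
  unfold _root_.heatKernelDt; fun_prop

theorem measurable_heatKernel (r : ℝ) : Measurable (heatKernel n r) := by
  unfold heatKernel; fun_prop

theorem heatKernel_nonneg {r : ℝ} (hr : 0 < r) (ξ : E) : 0 ≤ heatKernel n r ξ := by
  unfold heatKernel; have := pi_pos; positivity

theorem integral_heatKernel {r : ℝ} (hr : 0 < r) : ∫ ξ, heatKernel n r ξ = 1 := by
  have h2πr : 0 < 2 * π * r := by positivity
  have hb : 0 < 1 / (2 * r) := by positivity
  have hpt : ∀ ξ : E, heatKernel n r ξ =
      (2 * π * r) ^ (-(n : ℝ) / 2) * rexp (-(1 / (2 * r)) * ‖ξ‖ ^ 2) := by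
    intro ξ; unfold heatKernel; congr 2; ring
  simp_rw [hpt]
  rw [integral_const_mul, GaussianFourier.integral_rexp_neg_mul_sq_norm hb,
    finrank_euclideanSpace_fin, show π / (1 / (2 * r)) = 2 * π * r by field_simp,
    ← Real.rpow_add h2πr, show -(n : ℝ) / 2 + n / 2 = 0 by ring, Real.rpow_zero]

theorem integrable_heatKernel {r : ℝ} (hr : 0 < r) : Integrable (heatKernel n r) :=
  Integrable.of_integral_ne_zero (by simp [integral_heatKernel hr])

theorem lintegral_enorm_heatKernel {r : ℝ} (hr : 0 < r) : ∫⁻ ξ, ‖heatKernel n r ξ‖ₑ = 1 := by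
  rw [← ofReal_integral_norm_eq_lintegral_enorm (integrable_heatKernel hr)]
  simp_rw [Real.norm_of_nonneg (heatKernel_nonneg hr _), integral_heatKernel hr,
    ENNReal.ofReal_one]

noncomputable def heatKernelDtBound (n : ℕ) : ℝ := (n + 4) / 2 * 2 ^ ((n : ℝ) / 2)

theorem heatKernelDtBound_pos : 0 < heatKernelDtBound n := by
  unfold heatKernelDtBound; positivity

theorem abs_sub_mul_exp_neg_le {q c : ℝ} (hq : 0 ≤ q) (hc : 0 ≤ c) :
    |q - c| * rexp (-q) ≤ (c + 2) * rexp (-(q / 2)) := by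
  have hlin : q ≤ 2 * rexp (q / 2) := by linarith [Real.add_one_le_exp (q / 2)]
  have hq_exp : q * rexp (-q) ≤ 2 * rexp (-(q / 2)) :=
    calc q * rexp (-q) ≤ 2 * rexp (q / 2) * rexp (-q) := by gcongr
      _ = 2 * rexp (-(q / 2)) := by rw [mul_assoc, ← Real.exp_add]; ring_nf
  have hc_exp : c * rexp (-q) ≤ c * rexp (-(q / 2)) := by gcongr; linarith
  calc |q - c| * rexp (-q) ≤ (q + c) * rexp (-q) := by
        gcongr; exact (abs_sub q c).trans_eq (by rw [abs_of_nonneg hq, abs_of_nonneg hc])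
    _ ≤ (c + 2) * rexp (-(q / 2)) := by linarith

theorem abs_heatKernelDt_le {r : ℝ} (hr : 0 < r) (ξ : E) :
    |heatKernelDt n r ξ| ≤ heatKernelDtBound n / r * heatKernel n (2 * r) ξ := by
  have h2πr : 0 < 2 * π * r := by positivity
  set a := (2 * π * r) ^ (-(n : ℝ) / 2) with ha
  set q := ‖ξ‖ ^ 2 / (2 * r) with hq
  have hDt : heatKernelDt n r ξ = a * rexp (-q) * ((q - n / 2) / r) := by
    unfold heatKernelDt; rw [ha, hq]; field_simp
  have hg : heatKernel n (2 * r) ξ = (2 : ℝ) ^ (-(n : ℝ) / 2) * a * rexp (-(q / 2)) := by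
    unfold heatKernel
    rw [show 2 * π * (2 * r) = 2 * (2 * π * r) by ring, Real.mul_rpow zero_le_two h2πr.le]
    congr 2; rw [hq]; field_simp
  have hB : heatKernelDtBound n * (2 : ℝ) ^ (-(n : ℝ) / 2) = n / 2 + 2 := by
    rw [heatKernelDtBound, mul_assoc, ← Real.rpow_add zero_lt_two,
      show (n : ℝ) / 2 + -n / 2 = 0 by ring, Real.rpow_zero]
    ring
  have hexp := abs_sub_mul_exp_neg_le (q := q) (c := n / 2) (by positivity) (by positivity)
  have ha0 : 0 ≤ a := by positivity
  calc |heatKernelDt n r ξ| = a * (|q - n / 2| * rexp (-q)) / r := by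
        rw [hDt, abs_mul, abs_mul, abs_div, abs_of_nonneg ha0, abs_of_pos hr,
          abs_of_pos (Real.exp_pos _)]
        ring
    _ ≤ a * ((n / 2 + 2) * rexp (-(q / 2))) / r := by gcongr
    _ = heatKernelDtBound n / r * heatKernel n (2 * r) ξ := by
        rw [hg, ← hB]; ring

theorem lintegral_enorm_heatKernelDt_le {r : ℝ} (hr : 0 < r) :
    ∫⁻ ξ, ‖heatKernelDt n r ξ‖ₑ ≤ ENNReal.ofReal (heatKernelDtBound n / r) := by
  have hB : 0 ≤ heatKernelDtBound n / r := div_nonneg heatKernelDtBound_pos.le hr.le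
  calc ∫⁻ ξ, ‖heatKernelDt n r ξ‖ₑ
      ≤ ∫⁻ ξ, ENNReal.ofReal (heatKernelDtBound n / r) * ‖heatKernel n (2 * r) ξ‖ₑ := by
        refine lintegral_mono fun ξ => ?_
        rw [Real.enorm_eq_ofReal_abs, Real.enorm_of_nonneg (heatKernel_nonneg (by positivity) ξ),
          ← ENNReal.ofReal_mul hB]
        exact ENNReal.ofReal_le_ofReal (abs_heatKernelDt_le hr ξ)
    _ = ENNReal.ofReal (heatKernelDtBound n / r) := by
        rw [lintegral_const_mul' _ _ ENNReal.ofReal_ne_top,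
          lintegral_enorm_heatKernel (by positivity), mul_one]

end HeatKernel

section Convolution

variable {n : ℕ} {p : ℝ}

local notation "E" => EuclideanSpace ℝ (Fin n)

theorem convol_congr_ae {k φ ψ : E → ℝ} (h : φ =ᵐ[volume] ψ) : convol k φ = convol k ψ := by
  funext ξ
  refine integral_congr_ae ?_
  filter_upwards
    [(Measure.measurePreserving_sub_left volume ξ).quasiMeasurePreserving.ae_eq_comp h] with η hη
  simp only [Function.comp_apply] at hη
  rw [hη]

theorem convol_const_mul_left (c : ℝ) (k φ : E → ℝ) :
    convol (fun η => c * k η) φ = fun ξ => c * convol k φ ξ := by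
  funext ξ
  simp only [convol, mul_assoc, integral_const_mul]

theorem stronglyMeasurable_convol {k φ : E → ℝ} (hk : Measurable k)
    (hφ : AEStronglyMeasurable φ) : StronglyMeasurable (convol k φ) := by
  rw [convol_congr_ae hφ.ae_eq_mk]
  have hψ := hφ.stronglyMeasurable_mk.measurable
  exact StronglyMeasurable.integral_prod_right'
    (f := fun q : E × E => k q.2 * hφ.mk φ (q.1 - q.2)) (by fun_prop)

theorem eLpNorm_convol_le (hp : 1 ≤ p) {k φ : E → ℝ} (hk : Measurable k)
    (hφ : AEStronglyMeasurable φ) :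
    eLpNorm (convol k φ) (.ofReal p) volume ≤ (∫⁻ η, ‖k η‖ₑ) * eLpNorm φ (.ofReal p) volume := by
  rw [convol_congr_ae hφ.ae_eq_mk, eLpNorm_congr_ae hφ.ae_eq_mk]
  have hψ := hφ.stronglyMeasurable_mk.measurable
  set ψ := hφ.mk φ
  have hp0 : 0 < p := zero_lt_one.trans_le hp
  have hp0' : ENNReal.ofReal p ≠ 0 := by simpa using hp0
  simp only [eLpNorm_eq_eLpNorm' hp0' ENNReal.ofReal_ne_top, eLpNorm',
    ENNReal.toReal_ofReal hp0.le]
  calc (∫⁻ ξ, ‖convol k ψ ξ‖ₑ ^ p) ^ (1 / p)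
      ≤ (∫⁻ ξ, (∫⁻ η, ‖k η‖ₑ * ‖ψ (ξ - η)‖ₑ) ^ p) ^ (1 / p) := by
        gcongr with ξ
        exact (enorm_integral_le_lintegral_enorm (fun η => k η * ψ (ξ - η))).trans_eq
          (by simp only [enorm_mul])
    _ ≤ ((∫⁻ η, ‖k η‖ₑ) ^ p * ∫⁻ ξ, ‖ψ ξ‖ₑ ^ p) ^ (1 / p) := by
        gcongr
        exact lintegral_convolution_rpow_le hk.enorm hψ.enorm hp
    _ = (∫⁻ η, ‖k η‖ₑ) * (∫⁻ ξ, ‖ψ ξ‖ₑ ^ p) ^ (1 / p) := by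
        rw [ENNReal.mul_rpow_of_nonneg _ _ (by positivity), ← ENNReal.rpow_mul,
          mul_one_div_cancel hp0.ne', ENNReal.rpow_one]

theorem eLpNorm_heatS_le (hp : 1 ≤ p) (r : ℝ) {φ : E → ℝ} (hφ : AEStronglyMeasurable φ) :
    eLpNorm (heatS n r φ) (.ofReal p) volume ≤ eLpNorm φ (.ofReal p) volume := by
  unfold heatS
  split_ifs with hr
  · simpa [lintegral_enorm_heatKernel hr] using eLpNorm_convol_le hp (measurable_heatKernel r) hφ
  · exact le_rfl

theorem aestronglyMeasurable_heatS (r : ℝ) {φ : E → ℝ} (hφ : AEStronglyMeasurable φ) :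
    AEStronglyMeasurable (heatS n r φ) := by
  unfold heatS
  split_ifs
  · exact (stronglyMeasurable_convol (measurable_heatKernel r) hφ).aestronglyMeasurable
  · exact hφ

variable {α : Type*} [MeasurableSpace α] {ν : Measure α}

theorem lintegral_eLpNorm_convol_le {F : α → E → ℝ} {φ : E → ℝ} (hF : ∀ a, Measurable (F a))
    (hp : 1 ≤ p) (hφ : MemLp φ (.ofReal p)) :
    ∫⁻ a, eLpNorm (convol (F a) φ) (.ofReal p) volume ∂ν ≤
      (∫⁻ a, (∫⁻ η, ‖F a η‖ₑ) ∂ν) * eLpNorm φ (.ofReal p) volume := by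
  rw [← lintegral_mul_const' _ _ hφ.eLpNorm_ne_top]
  exact lintegral_mono fun a => eLpNorm_convol_le hp (hF a) hφ.1

variable [SFinite ν]

theorem lintegral_enorm_integral_le {F : α → E → ℝ} (hF : Measurable (Function.uncurry F)) :
    ∫⁻ η, ‖∫ a, F a η ∂ν‖ₑ ≤ ∫⁻ a, (∫⁻ η, ‖F a η‖ₑ) ∂ν := by
  rw [lintegral_lintegral_swap (by fun_prop)]
  exact lintegral_mono fun η => enorm_integral_le_lintegral_enorm _

theorem integral_convol_ae_eq_convol_integral {F : α → E → ℝ} {φ : E → ℝ}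
    (hF : Measurable (Function.uncurry F)) (hFfin : ∫⁻ a, (∫⁻ η, ‖F a η‖ₑ) ∂ν ≠ ∞)
    (hp : 1 ≤ p) (hφ : MemLp φ (.ofReal p)) :
    (fun ξ => ∫ a, convol (F a) φ ξ ∂ν) =ᵐ[volume] convol (fun η => ∫ a, F a η ∂ν) φ := by
  have hφψ := hφ.1.ae_eq_mk
  have hψ := hφ.1.stronglyMeasurable_mk.measurable
  set ψ := hφ.1.mk φ
  simp_rw [convol_congr_ae hφψ]
  have hp0 : 0 < p := zero_lt_one.trans_le hp
  set K : E → ℝ≥0∞ := fun η => ∫⁻ a, ‖F a η‖ₑ ∂ν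
  have hKfin : ∫⁻ η, K η ≠ ∞ := by rwa [lintegral_lintegral_swap (by fun_prop)] at hFfin
  have hψfin : ∫⁻ ξ, ‖ψ ξ‖ₑ ^ p ≠ ∞ := by
    have := lintegral_rpow_enorm_lt_top_of_eLpNorm_lt_top (by simpa using hp0)
      ENNReal.ofReal_ne_top ((eLpNorm_congr_ae hφψ).symm.trans_lt hφ.eLpNorm_lt_top)
    simpa [ENNReal.toReal_ofReal hp0.le] using this.ne
  filter_upwards [ae_lintegral_convolution_lt_top hF.enorm.lintegral_prod_left' hψ.enorm hp
    hKfin hψfin] with ξ hξ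
  have hint : Integrable (Function.uncurry fun a η => F a η * ψ (ξ - η)) (ν.prod volume) := by
    refine ⟨(by fun_prop : Measurable _).aestronglyMeasurable, ?_⟩
    have hF_ψ : ∀ η, ∫⁻ a, ‖F a η * ψ (ξ - η)‖ₑ ∂ν = K η * ‖ψ (ξ - η)‖ₑ := fun η => by
      simp only [enorm_mul]
      exact lintegral_mul_const _ (hF.comp measurable_prodMk_right).enorm
    show ∫⁻ z, ‖F z.1 z.2 * ψ (ξ - z.2)‖ₑ ∂(ν.prod volume) < ∞
    rwa [lintegral_prod _ (by fun_prop), lintegral_lintegral_swap (by fun_prop),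
      lintegral_congr hF_ψ]
  calc ∫ a, convol (F a) ψ ξ ∂ν = ∫ a, (∫ η, F a η * ψ (ξ - η)) ∂ν := rfl
    _ = ∫ η, ∫ a, F a η * ψ (ξ - η) ∂ν := integral_integral_swap hint
    _ = convol (fun η => ∫ a, F a η ∂ν) ψ ξ := by simp only [convol, integral_mul_const]

theorem aestronglyMeasurable_integral_convol {F : α → E → ℝ} {φ : E → ℝ}
    (hF : Measurable (Function.uncurry F)) (hFfin : ∫⁻ a, (∫⁻ η, ‖F a η‖ₑ) ∂ν ≠ ∞)
    (hp : 1 ≤ p) (hφ : MemLp φ (.ofReal p)) :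
    AEStronglyMeasurable (fun ξ => ∫ a, convol (F a) φ ξ ∂ν) :=
  (stronglyMeasurable_convol hF.stronglyMeasurable.integral_prod_left'.measurable hφ.1
    ).aestronglyMeasurable.congr (integral_convol_ae_eq_convol_integral hF hFfin hp hφ).symm

theorem eLpNorm_integral_convol_le {F : α → E → ℝ} {φ : E → ℝ}
    (hF : Measurable (Function.uncurry F)) (hFfin : ∫⁻ a, (∫⁻ η, ‖F a η‖ₑ) ∂ν ≠ ∞)
    (hp : 1 ≤ p) (hφ : MemLp φ (.ofReal p)) :
    eLpNorm (fun ξ => ∫ a, convol (F a) φ ξ ∂ν) (.ofReal p) volume ≤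
      (∫⁻ a, (∫⁻ η, ‖F a η‖ₑ) ∂ν) * eLpNorm φ (.ofReal p) volume := by
  rw [eLpNorm_congr_ae (integral_convol_ae_eq_convol_integral hF hFfin hp hφ)]
  exact (eLpNorm_convol_le hp hF.stronglyMeasurable.integral_prod_left'.measurable hφ.1).trans
    (by gcongr; exact lintegral_enorm_integral_le hF)

end Convolution

section Twisted

open Set

variable {n : ℕ} {x : ℝ → ℝ} {Cx γ s t p : ℝ}

local notation "E" => EuclideanSpace ℝ (Fin n)

noncomputable def twistedIntegral (n : ℕ) (x : ℝ → ℝ) (s t : ℝ)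
    (φ : EuclideanSpace ℝ (Fin n) → ℝ) : EuclideanSpace ℝ (Fin n) → ℝ :=
  fun ξ => ∫ u in s..t, (x t - x u) * convol (heatKernelDt n (t - u)) φ ξ

theorem lintegral_lintegral_twisted_le (hγ : 0 < γ) (hst : s ≤ t)
    (hx : ∀ u ∈ Ioc s t, |x t - x u| ≤ Cx * (t - u) ^ γ) :
    ∫⁻ u in Ioc s t, ∫⁻ η : E, ‖(x t - x u) * heatKernelDt n (t - u) η‖ₑ ≤
      ENNReal.ofReal (Cx * heatKernelDtBound n * ((t - s) ^ γ / γ)) := by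
  have hpt : ∀ u ∈ Ioc s t, ∫⁻ η : E, ‖(x t - x u) * heatKernelDt n (t - u) η‖ₑ ≤
      ENNReal.ofReal (Cx * heatKernelDtBound n) * ENNReal.ofReal ((t - u) ^ (γ - 1)) := by
    intro u hu
    rcases hu.2.eq_or_lt with rfl | hut
    · simp
    have hr : 0 < t - u := sub_pos.2 hut
    simp only [enorm_mul]
    rw [lintegral_const_mul' _ _ enorm_ne_top, ← ENNReal.ofReal_mul' (by positivity)]
    calc ‖x t - x u‖ₑ * ∫⁻ η, ‖heatKernelDt n (t - u) η‖ₑ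
        ≤ ENNReal.ofReal (Cx * (t - u) ^ γ) *
            ENNReal.ofReal (heatKernelDtBound n / (t - u)) := by
          gcongr
          · rw [Real.enorm_eq_ofReal_abs]; exact ENNReal.ofReal_le_ofReal (hx u hu)
          · exact lintegral_enorm_heatKernelDt_le hr
      _ = ENNReal.ofReal (Cx * heatKernelDtBound n * (t - u) ^ (γ - 1)) := by
          rw [← ENNReal.ofReal_mul' (div_nonneg heatKernelDtBound_pos.le hr.le),
            Real.rpow_sub_one hr.ne']
          ring_nf
  calc ∫⁻ u in Ioc s t, ∫⁻ η : E, ‖(x t - x u) * heatKernelDt n (t - u) η‖ₑ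
      ≤ ∫⁻ u in Ioc s t,
          ENNReal.ofReal (Cx * heatKernelDtBound n) * ENNReal.ofReal ((t - u) ^ (γ - 1)) :=
        setLIntegral_mono' measurableSet_Ioc hpt
    _ = ENNReal.ofReal (Cx * heatKernelDtBound n * ((t - s) ^ γ / γ)) := by
        rw [lintegral_const_mul' _ _ ENNReal.ofReal_ne_top, lintegral_Ioc_ofReal_sub_rpow hγ hst,
          ← ENNReal.ofReal_mul' (by positivity)]

theorem lintegral_eLpNorm_twisted_lt_top (hγ : 0 < γ) (hst : s ≤ t)
    (hx : ∀ u ∈ Ioc s t, |x t - x u| ≤ Cx * (t - u) ^ γ) (hp : 1 ≤ p) {φ : E → ℝ}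
    (hφ : MemLp φ (.ofReal p)) :
    ∫⁻ u in Ioc s t,
      eLpNorm (fun ξ => (x t - x u) * convol (heatKernelDt n (t - u)) φ ξ) (.ofReal p) volume
        < ⊤ := by
  simp_rw [← convol_const_mul_left]
  exact (lintegral_eLpNorm_convol_le (fun u => by fun_prop) hp hφ).trans_lt <| ENNReal.mul_lt_top
    ((lintegral_lintegral_twisted_le hγ hst hx).trans_lt ENNReal.ofReal_lt_top) hφ.eLpNorm_lt_top

theorem twistedIntegral_eq_integral_convol {y : ℝ → ℝ} (hst : s ≤ t)
    (hyx : EqOn y x (Icc s t)) (φ : E → ℝ) :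
    twistedIntegral n x s t φ =
      fun ξ => ∫ u in Ioc s t, convol (fun η => (y t - y u) * heatKernelDt n (t - u) η) φ ξ := by
  funext ξ
  refine (intervalIntegral.integral_of_le hst).trans (setIntegral_congr_fun measurableSet_Ioc ?_)
  intro u hu
  simp only [convol_const_mul_left, hyx (right_mem_Icc.2 hst), hyx (Ioc_subset_Icc_self hu)]

theorem aestronglyMeasurable_twistedIntegral (hγ : 0 < γ) (hst : s ≤ t)
    (hcont : ContinuousOn x (Icc s t)) (hx : ∀ u ∈ Ioc s t, |x t - x u| ≤ Cx * (t - u) ^ γ)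
    (hp : 1 ≤ p) {φ : E → ℝ} (hφ : MemLp φ (.ofReal p)) :
    AEStronglyMeasurable (twistedIntegral n x s t φ) := by
  obtain ⟨y, hy, hyx⟩ := hcont.exists_continuous_eqOn_Icc hst
  have hy_bound : ∀ u ∈ Ioc s t, |y t - y u| ≤ Cx * (t - u) ^ γ := fun u hu => by
    rw [hyx (right_mem_Icc.2 hst), hyx (Ioc_subset_Icc_self hu)]; exact hx u hu
  rw [twistedIntegral_eq_integral_convol hst hyx]
  exact aestronglyMeasurable_integral_convol (by fun_prop)
    ((lintegral_lintegral_twisted_le hγ hst hy_bound).trans_lt ENNReal.ofReal_lt_top).ne hp hφ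

theorem eLpNorm_twistedIntegral_le (hγ : 0 < γ) (hst : s ≤ t)
    (hcont : ContinuousOn x (Icc s t)) (hx : ∀ u ∈ Ioc s t, |x t - x u| ≤ Cx * (t - u) ^ γ)
    (hp : 1 ≤ p) {φ : E → ℝ} (hφ : MemLp φ (.ofReal p)) :
    eLpNorm (twistedIntegral n x s t φ) (.ofReal p) volume ≤
      ENNReal.ofReal (Cx * heatKernelDtBound n * ((t - s) ^ γ / γ)) *
        eLpNorm φ (.ofReal p) volume := by
  obtain ⟨y, hy, hyx⟩ := hcont.exists_continuous_eqOn_Icc hst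
  have hy_bound : ∀ u ∈ Ioc s t, |y t - y u| ≤ Cx * (t - u) ^ γ := fun u hu => by
    rw [hyx (right_mem_Icc.2 hst), hyx (Ioc_subset_Icc_self hu)]; exact hx u hu
  have hK := lintegral_lintegral_twisted_le (n := n) hγ hst hy_bound
  rw [twistedIntegral_eq_integral_convol hst hyx]
  exact (eLpNorm_integral_convol_le (by fun_prop) (hK.trans_lt ENNReal.ofReal_lt_top).ne hp
    hφ).trans (by gcongr)

end Twisted

theorem twisted_first_order_operator_holder_bound_general
    (n : ℕ) (γ : ℝ) (hγ0 : 0 < γ) :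
    ∃ C : ℝ, 0 < C ∧
      ∀ (p : ℝ), 1 ≤ p → ∀ (T : ℝ), 0 < T →
      ∀ (x : ℝ → ℝ) (Cx : ℝ),
        (∀ s t : ℝ, 0 ≤ s → s ≤ t → t ≤ T → |x t - x s| ≤ Cx * (t - s) ^ γ) →
      ∀ φ : EuclideanSpace ℝ (Fin n) → ℝ, MemLp φ (ENNReal.ofReal p) volume →
      ∀ s t : ℝ, 0 ≤ s → s ≤ t → t ≤ T →
        ((∫⁻ u in Set.Ioc s t,
            eLpNorm (fun ξ => (x t - x u) * convol (heatKernelDt n (t - u)) φ ξ)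
              (ENNReal.ofReal p) volume) < ⊤) ∧
        eLpNorm
            (fun ξ => (x t - x s) * heatS n (t - s) φ ξ
              - ∫ u in s..t, (x t - x u) * convol (heatKernelDt n (t - u)) φ ξ)
            (ENNReal.ofReal p) volume ≤
          ENNReal.ofReal (C * Cx * (t - s) ^ γ) *
            eLpNorm φ (ENNReal.ofReal p) volume := by
  refine ⟨1 + heatKernelDtBound n / γ, by have := heatKernelDtBound_pos (n := n); positivity, ?_⟩
  intro p hp T hT x Cx hx φ hφ s t hs hst htT
  have hxt : ∀ u ∈ Set.Ioc s t, |x t - x u| ≤ Cx * (t - u) ^ γ :=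
    fun u hu => hx u t (hs.trans hu.1.le) hu.2 htT
  have hcont : ContinuousOn x (Set.Icc s t) :=
    (continuousOn_Icc_of_abs_sub_le_rpow hγ0 hx).mono (Set.Icc_subset_Icc hs htT)
  have hxst : |x t - x s| ≤ Cx * (t - s) ^ γ := hx s t hs hst htT
  refine ⟨lintegral_eLpNorm_twisted_lt_top hγ0 hst hxt hp hφ, ?_⟩
  calc eLpNorm ((x t - x s) • heatS n (t - s) φ - twistedIntegral n x s t φ) (.ofReal p) volume
      ≤ eLpNorm ((x t - x s) • heatS n (t - s) φ) (.ofReal p) volume +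
          eLpNorm (twistedIntegral n x s t φ) (.ofReal p) volume :=
        eLpNorm_sub_le ((aestronglyMeasurable_heatS _ hφ.1).const_smul _)
          (aestronglyMeasurable_twistedIntegral hγ0 hst hcont hxt hp hφ)
          (ENNReal.one_le_ofReal.2 hp)
    _ ≤ ENNReal.ofReal (Cx * (t - s) ^ γ) * eLpNorm φ (.ofReal p) volume +
          ENNReal.ofReal (Cx * heatKernelDtBound n * ((t - s) ^ γ / γ)) *
            eLpNorm φ (.ofReal p) volume := by
        rw [eLpNorm_const_smul, Real.enorm_eq_ofReal_abs]
        exact add_le_add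
          (mul_le_mul' (ENNReal.ofReal_le_ofReal hxst) (eLpNorm_heatS_le hp _ hφ.1))
          (eLpNorm_twistedIntegral_le hγ0 hst hcont hxt hp hφ)
    _ = ENNReal.ofReal ((1 + heatKernelDtBound n / γ) * Cx * (t - s) ^ γ) *
          eLpNorm φ (.ofReal p) volume := by
        have := heatKernelDtBound_pos (n := n)
        have hCx : 0 ≤ Cx * (t - s) ^ γ := (abs_nonneg _).trans hxst
        rw [← add_mul, ← ENNReal.ofReal_add hCx
          (by rw [mul_right_comm, mul_div_assoc']; positivity)]
        ring_nf

/-- Hölder bound for the twisted first-order operator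
`X^x_{ts} φ = (x_t - x_s) S_{t-s}φ - ∫_s^t (x_t - x_u)(∂g_{t-u} * φ) du`.
For a `γ`-Hölder signal `x` (with seminorm bounded by `Cx`), the integral
converges absolutely in `L^p(ℝ^n)` and
`‖X^x_{ts}φ‖_{L^p} ≤ C · Cx · (t-s)^γ · ‖φ‖_{L^p}`
with `C` depending only on `n` and `γ`. -/
theorem twisted_first_order_operator_holder_bound
    (n : ℕ) (hn : 1 ≤ n) (γ : ℝ) (hγ0 : 0 < γ) (hγ1 : γ < 1) :
    ∃ C : ℝ, 0 < C ∧
      ∀ (p : ℝ), 1 ≤ p → ∀ (T : ℝ), 0 < T →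
      ∀ (x : ℝ → ℝ) (Cx : ℝ),
        (∀ s t : ℝ, 0 ≤ s → s ≤ t → t ≤ T → |x t - x s| ≤ Cx * (t - s) ^ γ) →
      ∀ φ : EuclideanSpace ℝ (Fin n) → ℝ, MemLp φ (ENNReal.ofReal p) volume →
      ∀ s t : ℝ, 0 ≤ s → s ≤ t → t ≤ T →
        ((∫⁻ u in Set.Ioc s t,
            eLpNorm (fun ξ => (x t - x u) * convol (heatKernelDt n (t - u)) φ ξ)
              (ENNReal.ofReal p) volume) < ⊤) ∧
        eLpNorm
            (fun ξ => (x t - x s) * heatS n (t - s) φ ξ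
              - ∫ u in s..t, (x t - x u) * convol (heatKernelDt n (t - u)) φ ξ)
            (ENNReal.ofReal p) volume ≤
          ENNReal.ofReal (C * Cx * (t - s) ^ γ) *
            eLpNorm φ (ENNReal.ofReal p) volume :=
  twisted_first_order_operator_holder_bound_general n γ hγ0
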